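/- The centralizer of E in the Weyl algebra D equals E itself: if ω ∈ D satisfies ω ∘ e_j = e_j ∘ ω for all j = 1,…,n, then ω ∈ E. -/

import Mathlib

open MvPolynomial

noncomputable section

/-- The polynomial ring `P = ℂ[x_1, …, x_n]`. -/
abbrev Pn (n : ℕ) := MvPolynomial (Fin n) ℂ

/-- Multiplication by the variable `x_j`, as a ℂ-linear endomorphism of `P`. -/
def Xop (n : ℕ) (j : Fin n) : Module.End ℂ (Pn n) :=
  LinearMap.mulLeft ℂ (X j)

/-- The partial derivative `∂_j`, as a ℂ-linear endomorphism of `P`. -/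
def Dop (n : ℕ) (j : Fin n) : Module.End ℂ (Pn n) :=
  (pderiv j).toLinearMap

/-- The Weyl algebra `D`: the ℂ-subalgebra of `End_ℂ(P)` generated by the `X_j` and `∂_j`. -/
def weylD (n : ℕ) : Subalgebra ℂ (Module.End ℂ (Pn n)) :=
  Algebra.adjoin ℂ (Set.range (Xop n) ∪ Set.range (Dop n))

/-- The Euler operator `e_j = X_j ∘ ∂_j`. -/
def eulOp (n : ℕ) (j : Fin n) : Module.End ℂ (Pn n) :=
  Xop n j * Dop n j

/-- The subalgebra `E = ℂ[e_1, …, e_n]` generated by the Euler operators. -/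
def eulAlg (n : ℕ) : Subalgebra ℂ (Module.End ℂ (Pn n)) :=
  Algebra.adjoin ℂ (Set.range (eulOp n))

/-!
An operator `ω` commuting with all Euler operators preserves their joint eigenlines `ℂ • x^m`, so
it is diagonal, `ω (x^m) = c m • x^m`, and `E` consists exactly of the diagonal operators whose
eigenvalue function `c` is a polynomial in the exponent `m`. If moreover `ω ∈ D`, then
`ad X_j` is locally nilpotent on `ω`, because it kills every `X_i` and sends `∂_i` to a scalar.
Since `(ad X_j)^k ω` sends `x^m` to `± (Δ_j^k c) m • x^(m + k e_j)`, high forward differences of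
`c` vanish in every direction, and Newton's interpolation formula writes `c` as a polynomial in
the binomial coefficients `(m_j choose k)`.
-/

open Finset fwdDiff

section ForwardDifference

variable {M G : Type*} [AddCommMonoid M] [AddCommGroup G]

lemma fwdDiff_commute (h h' : M) :
    Function.Commute (fwdDiff h : (M → G) → M → G) (fwdDiff h') := fun f => by
  ext y
  simp only [fwdDiff, add_right_comm y h h']
  abel

lemma fwdDiff_iter_zero (h : M) (k : ℕ) : Δ_[h] ^[k] (0 : M → G) = 0 :=
  Function.iterate_fixed (fwdDiff_const h 0) k

lemma fwdDiff_iter_eq_zero_of_le {h : M} {f : M → G} {K k : ℕ} (hf : Δ_[h] ^[K] f = 0)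
    (hk : K ≤ k) : Δ_[h] ^[k] f = 0 := by
  obtain ⟨d, rfl⟩ := Nat.exists_eq_add_of_le hk
  rw [add_comm, Function.iterate_add_apply, hf, fwdDiff_iter_zero]

theorem shift_eq_sum_range_fwdDiff_iter {h : M} {f : M → G} {K : ℕ} (hf : Δ_[h] ^[K] f = 0)
    (n : ℕ) (y : M) : f (y + n • h) = ∑ k ∈ range K, n.choose k • Δ_[h] ^[k] f y := by
  rw [shift_eq_sum_fwdDiff_iter h f n y]
  calc ∑ k ∈ range (n + 1), n.choose k • Δ_[h] ^[k] f y
      = ∑ k ∈ range (n + 1 + K), n.choose k • Δ_[h] ^[k] f y :=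
        sum_subset (range_subset_range.2 (by omega)) fun k _ hk => by
          rw [Nat.choose_eq_zero_of_lt (by simpa using hk), zero_smul]
    _ = ∑ k ∈ range K, n.choose k • Δ_[h] ^[k] f y :=
        (sum_subset (range_subset_range.2 (by omega)) fun k _ hk => by
          rw [fwdDiff_iter_eq_zero_of_le hf (by simpa using hk), Pi.zero_apply, smul_zero]).symm

end ForwardDifference

section CoordinatePolynomials

variable (σ K : Type*)

def coordFun [NatCast K] (j : σ) : (σ →₀ ℕ) → K := fun m => m j

def coordPolynomials [CommSemiring K] : Subalgebra K ((σ →₀ ℕ) → K) :=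
  Algebra.adjoin K (Set.range (coordFun σ K))

variable {σ K} [Field K] [CharZero K]

lemma choose_apply_mem_coordPolynomials (a : σ) (k : ℕ) :
    (fun m : σ →₀ ℕ => ((m a).choose k : K)) ∈ coordPolynomials σ K := by
  have hmem : Polynomial.aeval (coordFun σ K a) ((k.factorial : K)⁻¹ • descPochhammer K k) ∈
      coordPolynomials σ K :=
    Algebra.adjoin_mono (Set.singleton_subset_iff.2 (Set.mem_range_self a))
      (Polynomial.aeval_mem_adjoin_singleton K _)
  convert hmem using 1
  funext m
  change _ = Pi.evalAlgHom K (fun _ => K) m (Polynomial.aeval (coordFun σ K a) _)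
  rw [← Polynomial.aeval_algHom_apply]
  simp [coordFun, Nat.cast_choose_eq_descPochhammer_div, div_eq_inv_mul]

lemma comp_sum_single_mem_coordPolynomials (N : ℕ) (s : Finset σ) (f : (σ →₀ ℕ) → K)
    (hf : ∀ j, Δ_[Finsupp.single j 1] ^[N] f = 0) :
    (fun m => f (∑ j ∈ s, Finsupp.single j (m j))) ∈ coordPolynomials σ K := by
  classical
  induction s using Finset.induction_on generalizing f with
  | empty => exact Subalgebra.algebraMap_mem (coordPolynomials σ K) (f 0)
  | insert a s ha ih =>
    have newton : (fun m => f (∑ j ∈ insert a s, Finsupp.single j (m j))) =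
        ∑ k ∈ range N, (fun m : σ →₀ ℕ => ((m a).choose k : K)) *
          fun m => Δ_[Finsupp.single a 1] ^[k] f (∑ j ∈ s, Finsupp.single j (m j)) := by
      funext m
      rw [sum_insert ha, add_comm, ← Finsupp.smul_single_one,
        shift_eq_sum_range_fwdDiff_iter (hf a)]
      simp [Finset.sum_apply, nsmul_eq_mul]
    rw [newton]
    refine Subalgebra.sum_mem _ fun k _ =>
      Subalgebra.mul_mem _ (choose_apply_mem_coordPolynomials a k) (ih _ fun j => ?_)
    rw [(fwdDiff_commute _ _).iterate_iterate N k f, hf j, fwdDiff_iter_zero]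

theorem mem_coordPolynomials_of_fwdDiff_iter_eq_zero [Fintype σ] {f : (σ →₀ ℕ) → K} {N : ℕ}
    (hf : ∀ j, Δ_[Finsupp.single j 1] ^[N] f = 0) : f ∈ coordPolynomials σ K := by
  simpa only [Finsupp.univ_sum_single] using comp_sum_single_mem_coordPolynomials N univ f hf

end CoordinatePolynomials

section DiagonalOperators

-- Over a ring, Mathlib's module instance on `MvPolynomial σ R` is `MvPolynomial.instModuleSelf`;
-- over a semiring, `Module.End` would only non-reducibly equal the one used for `Pn n`.
variable {σ R : Type*} [CommRing R]

lemma constr_basisMonomials_monomial {M : Type*} [AddCommMonoid M] [Module R M]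
    (f : (σ →₀ ℕ) → M) (m : σ →₀ ℕ) (a : R) :
    (basisMonomials σ R).constr R f (monomial m a) = a • f m := by
  have : monomial m a = a • basisMonomials σ R m := by
    rw [coe_basisMonomials, smul_monomial, smul_eq_mul, mul_one]
  rw [this, map_smul, Module.Basis.constr_basis]

def diagOp : ((σ →₀ ℕ) → R) →ₐ[R] Module.End R (MvPolynomial σ R) where
  toFun c := (basisMonomials σ R).constr R fun m => monomial m (c m)
  map_one' := (basisMonomials σ R).ext fun m => by simp [constr_basisMonomials_monomial]
  map_mul' c d := (basisMonomials σ R).ext fun m => by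
    simp [constr_basisMonomials_monomial, smul_monomial, mul_comm]
  map_zero' := (basisMonomials σ R).ext fun m => by simp [constr_basisMonomials_monomial]
  map_add' c d := (basisMonomials σ R).ext fun m => by simp [constr_basisMonomials_monomial]
  commutes' r := (basisMonomials σ R).ext fun m => by
    simp [constr_basisMonomials_monomial, Algebra.algebraMap_eq_smul_one, smul_monomial]

lemma diagOp_monomial (c : (σ →₀ ℕ) → R) (m : σ →₀ ℕ) (a : R) :
    diagOp c (monomial m a) = monomial m (c m * a) := by
  simp [diagOp, constr_basisMonomials_monomial, smul_monomial, mul_comm]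

lemma coeff_diagOp (c : (σ →₀ ℕ) → R) (m : σ →₀ ℕ) (p : MvPolynomial σ R) :
    coeff m (diagOp c p) = c m * coeff m p := by
  classical
  induction p using MvPolynomial.induction_on' with
  | monomial u a =>
    rw [diagOp_monomial, coeff_monomial, coeff_monomial]
    split_ifs with h <;> simp [h]
  | add p q hp hq => rw [map_add, coeff_add, coeff_add, hp, hq, mul_add]

end DiagonalOperators

section JointEigenvectors

variable {σ R : Type*} [CommRing R] [IsDomain R] [CharZero R]

lemma eq_diagOp_of_commute {T : Module.End R (MvPolynomial σ R)}
    (hT : ∀ j, T * diagOp (coordFun σ R j) = diagOp (coordFun σ R j) * T) :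
    T = diagOp fun m => coeff m (T (monomial m 1)) := by
  classical
  refine (basisMonomials σ R).ext fun m => ?_
  simp only [coe_basisMonomials, diagOp_monomial, mul_one]
  ext a
  rw [coeff_monomial]
  split_ifs with ham
  · rw [ham]
  obtain ⟨j, hj⟩ : ∃ j, m j ≠ a j := by
    by_contra! h
    exact ham (Finsupp.ext h)
  have h := congrArg (coeff a) (LinearMap.congr_fun (hT j) (monomial m 1))
  simp only [Module.End.mul_apply, diagOp_monomial, coeff_diagOp, coordFun, mul_one] at h
  rw [← mul_one (m j : R), ← smul_eq_mul, ← smul_monomial, map_smul, coeff_smul, smul_eq_mul] at h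
  exact (mul_eq_mul_right_iff.1 h).resolve_left (by exact_mod_cast hj)

end JointEigenvectors

section

attribute [local instance 100] LieRing.ofAssociativeRing

open LieAlgebra

section LocallyNilpotentAd

variable (R : Type*) {A : Type*} [CommRing R] [Ring A] [Algebra R A]

lemma LieAlgebra.ad_apply_mul (x a b : A) : ad R A x (a * b) = ad R A x a * b + a * ad R A x b := by
  rw [ad_apply, ad_apply, ad_apply, Ring.lie_def, Ring.lie_def, Ring.lie_def]
  noncomm_ring

lemma LieAlgebra.ad_pow_apply_mul (x a b : A) (n : ℕ) :
    (ad R A x ^ n) (a * b) =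
      ∑ ij ∈ antidiagonal n, n.choose ij.1 • ((ad R A x ^ ij.1) a * (ad R A x ^ ij.2) b) := by
  induction n with
  | zero => simp
  | succ n ih =>
    rw [sum_antidiagonal_choose_succ_nsmul (fun i j => (ad R A x ^ i) a * (ad R A x ^ j) b) n]
    simp only [pow_succ', Module.End.mul_apply, ih, map_sum, map_nsmul, ad_apply_mul, nsmul_add,
      sum_add_distrib]
    rw [add_comm, add_left_cancel_iff, sum_congr rfl]
    rintro ⟨i, j⟩ hij
    rw [HasAntidiagonal.mem_antidiagonal] at hij
    rw [Nat.choose_symm_of_eq_add hij.symm]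

def adLocallyNilpotent (x : A) : Subalgebra R A where
  carrier := {a | ∃ k, (ad R A x ^ k) a = 0}
  mul_mem' := by
    rintro a b ⟨k, hk⟩ ⟨l, hl⟩
    refine ⟨k + l, ?_⟩
    rw [ad_pow_apply_mul]
    refine sum_eq_zero fun ij hij => ?_
    rw [HasAntidiagonal.mem_antidiagonal] at hij
    rcases le_or_gt k ij.1 with hki | hki
    · rw [Module.End.pow_map_zero_of_le hki hk, zero_mul, smul_zero]
    · rw [Module.End.pow_map_zero_of_le (by omega : l ≤ ij.2) hl, mul_zero, smul_zero]
  add_mem' := by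
    rintro a b ⟨k, hk⟩ ⟨l, hl⟩
    refine ⟨max k l, ?_⟩
    rw [map_add, Module.End.pow_map_zero_of_le (le_max_left k l) hk,
      Module.End.pow_map_zero_of_le (le_max_right k l) hl, add_zero]
  algebraMap_mem' r := ⟨1, by simp [ad_apply, Ring.lie_def, Algebra.commutes]⟩

end LocallyNilpotentAd

section WeylAlgebra

variable {n : ℕ}

lemma Xop_monomial (j : Fin n) (m : Fin n →₀ ℕ) (a : ℂ) :
    Xop n j (monomial m a) = monomial (m + Finsupp.single j 1) a := by
  rw [Xop, LinearMap.mulLeft_apply, X, monomial_mul, one_mul, add_comm]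

lemma eulOp_eq_diagOp (j : Fin n) : eulOp n j = diagOp (coordFun (Fin n) ℂ j) := by
  refine (basisMonomials (Fin n) ℂ).ext fun m => ?_
  simp only [coe_basisMonomials, diagOp_monomial, eulOp, Module.End.mul_apply, Dop,
    Derivation.coeFn_coe, pderiv_monomial, Xop_monomial, coordFun, one_mul, mul_one]
  rcases Nat.eq_zero_or_pos (m j) with h | h
  · simp [h]
  · rw [tsub_add_cancel_of_le (Finsupp.single_le_iff.2 h)]

lemma eulAlg_eq_map_diagOp : eulAlg n = (coordPolynomials (Fin n) ℂ).map diagOp := by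
  have : eulOp n = diagOp ∘ coordFun (Fin n) ℂ := funext eulOp_eq_diagOp
  rw [eulAlg, this, Set.range_comp, ← AlgHom.map_adjoin, coordPolynomials]

lemma eulAlg_le_weylD : eulAlg n ≤ weylD n :=
  Algebra.adjoin_le <| by
    rintro _ ⟨j, rfl⟩
    exact mul_mem (Algebra.subset_adjoin (Or.inl ⟨j, rfl⟩))
      (Algebra.subset_adjoin (Or.inr ⟨j, rfl⟩))

lemma lie_Xop_Dop (i j : Fin n) :
    ⁅Xop n j, Dop n i⁆ = algebraMap ℂ _ (if i = j then -1 else 0) := by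
  refine LinearMap.ext fun p => ?_
  rcases eq_or_ne i j with rfl | hij
  · simp [Ring.lie_def, Xop, Dop, Derivation.leibniz, Algebra.algebraMap_eq_smul_one]
  · simp [Ring.lie_def, Xop, Dop, Derivation.leibniz, pderiv_X, Algebra.algebraMap_eq_smul_one,
      hij]

lemma weylD_le_adLocallyNilpotent (j : Fin n) : weylD n ≤ adLocallyNilpotent ℂ (Xop n j) := by
  refine Algebra.adjoin_le ?_
  rintro _ (⟨i, rfl⟩ | ⟨i, rfl⟩)
  · refine ⟨1, ?_⟩
    rw [pow_one, ad_apply, Ring.lie_def, sub_eq_zero]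
    exact LinearMap.ext fun p => mul_left_comm _ _ _
  · refine ⟨2, ?_⟩
    rw [pow_two, Module.End.mul_apply, ad_apply, ad_apply, lie_Xop_Dop, Ring.lie_def,
      Algebra.commutes, sub_self]

lemma ad_Xop_pow_diagOp_monomial (j : Fin n) (c : (Fin n →₀ ℕ) → ℂ) (k : ℕ)
    (m : Fin n →₀ ℕ) :
    (ad ℂ _ (Xop n j) ^ k) (diagOp c) (monomial m 1) =
      monomial (m + k • Finsupp.single j 1) ((-1) ^ k * Δ_[Finsupp.single j 1] ^[k] c m) := by
  induction k generalizing m with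
  | zero => simp [diagOp_monomial]
  | succ k ih =>
    rw [pow_succ', Module.End.mul_apply, ad_apply, Ring.lie_def, LinearMap.sub_apply,
      Module.End.mul_apply, Module.End.mul_apply, ih, Xop_monomial, Xop_monomial, ih,
      add_right_comm, add_assoc, ← succ_nsmul', ← map_sub, Function.iterate_succ_apply', fwdDiff]
    ring_nf

lemma fwdDiff_iter_eq_zero_of_ad_pow_eq_zero {j : Fin n} {c : (Fin n →₀ ℕ) → ℂ} {k : ℕ}
    (h : (ad ℂ _ (Xop n j) ^ k) (diagOp c) = 0) : Δ_[Finsupp.single j 1] ^[k] c = 0 := by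
  funext m
  have hm := LinearMap.congr_fun h (monomial m 1)
  rw [ad_Xop_pow_diagOp_monomial, LinearMap.zero_apply, monomial_eq_zero, mul_eq_zero] at hm
  exact hm.resolve_left (pow_ne_zero k (neg_ne_zero.2 one_ne_zero))

theorem mem_eulAlg_of_mem_weylD_of_commute {ω : Module.End ℂ (Pn n)} (hD : ω ∈ weylD n)
    (hcomm : ∀ j, ω * eulOp n j = eulOp n j * ω) : ω ∈ eulAlg n := by
  obtain ⟨c, rfl⟩ : ∃ c, ω = diagOp c :=
    ⟨_, eq_diagOp_of_commute fun j => by simpa only [eulOp_eq_diagOp] using hcomm j⟩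
  choose k hk using fun j => weylD_le_adLocallyNilpotent j hD
  have hc : c ∈ coordPolynomials (Fin n) ℂ :=
    mem_coordPolynomials_of_fwdDiff_iter_eq_zero fun j =>
      fwdDiff_iter_eq_zero_of_le (fwdDiff_iter_eq_zero_of_ad_pow_eq_zero (hk j))
        (le_sup (mem_univ j))
  rw [eulAlg_eq_map_diagOp]
  exact ⟨c, hc, rfl⟩

lemma commute_eulOp_of_mem_eulAlg {ω : Module.End ℂ (Pn n)} (hE : ω ∈ eulAlg n) (j : Fin n) :
    ω * eulOp n j = eulOp n j * ω := by
  rw [eulAlg_eq_map_diagOp, Subalgebra.mem_map] at hE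
  obtain ⟨c, -, rfl⟩ := hE
  rw [eulOp_eq_diagOp, ← map_mul, ← map_mul, mul_comm]

end WeylAlgebra

end

theorem stmt5_general (n : ℕ) :
    {ω : Module.End ℂ (Pn n) | ω ∈ weylD n ∧ ∀ j, ω * eulOp n j = eulOp n j * ω}
      = ↑(eulAlg n) := by
  ext ω
  exact ⟨fun ⟨hD, hcomm⟩ => mem_eulAlg_of_mem_weylD_of_commute hD hcomm,
    fun hE => ⟨eulAlg_le_weylD hE, commute_eulOp_of_mem_eulAlg hE⟩⟩

/-- the centralizer of `E` in the Weyl algebra `D` is `E` itself: an element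
`ω ∈ D` commutes with all the Euler operators `e_j` if and only if `ω ∈ E`. -/
theorem stmt5 (n : ℕ) (hn : 1 ≤ n) :
    {ω : Module.End ℂ (Pn n) | ω ∈ weylD n ∧ ∀ j, ω * eulOp n j = eulOp n j * ω}
      = ↑(eulAlg n) :=
  stmt5_general n

end
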